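/- arXiv:1009.2989 — 7 statements merged into one kernel-verified Lean document; each statement's English description precedes it below -/
import Mathlib

section
/- Every root of the symmetrized Pochhammer polynomial P_k^+(t) = (P_k(it)+P_k(-it))/2 is real: if t = u + iv with u, v real and P_k^+(t) = 0, then v = 0. -/
/-!
Write `s = i t`, so that `2 P_k^+(t) = P_k(s) + P_k(-s)` with `P_k(±s) = ∏ (1 ∓ s/j)`.
If `Re s < 0`, then `s/j` is strictly closer to `-1` than to `1`, so every factor of
`P_k(-s)` is strictly smaller in modulus than the corresponding factor of `P_k(s)`;
hence `|P_k(-s)| < |P_k(s)|` and the sum cannot vanish. The case `Re s > 0` is symmetric,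
and `Re s = -Im t`.
-/

open Complex

noncomputable def P (k : ℕ) (s : ℂ) : ℂ := ∏ j ∈ Finset.Icc 1 k, (1 - s / j)

noncomputable def Pplus (k : ℕ) (t : ℂ) : ℂ := (P k (I * t) + P k (-(I * t))) / 2

theorem Finset.prod_lt_prod_of_nonempty_of_nonneg {ι R : Type*} [CommMonoidWithZero R]
    [PartialOrder R] [ZeroLEOneClass R] [PosMulStrictMono R] [MulPosMono R]
    {s : Finset ι} {f g : ι → R} (hs : s.Nonempty)
    (hf : ∀ i ∈ s, 0 ≤ f i) (hfg : ∀ i ∈ s, f i < g i) : ∏ i ∈ s, f i < ∏ i ∈ s, g i := by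
  induction hs using Finset.Nonempty.cons_induction with
  | singleton a => simpa using hfg a (Finset.mem_singleton_self a)
  | cons a s ha hs ih =>
    simp only [Finset.forall_mem_cons, Finset.prod_cons] at hf hfg ⊢
    exact mul_lt_mul'' hfg.1 (ih hf.2 hfg.2) hf.1 (Finset.prod_nonneg hf.2)

theorem Complex.norm_one_add_lt_norm_one_sub {z : ℂ} (hz : z.re < 0) : ‖1 + z‖ < ‖1 - z‖ := by
  rw [← sq_lt_sq₀ (norm_nonneg _) (norm_nonneg _), Complex.sq_norm, Complex.sq_norm,
    normSq_apply, normSq_apply]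
  simp only [add_re, sub_re, one_re, add_im, sub_im, one_im]
  nlinarith

theorem norm_P_neg_lt_norm_P {k : ℕ} (hk : k ≠ 0) {s : ℂ} (hs : s.re < 0) :
    ‖P k (-s)‖ < ‖P k s‖ := by
  simp only [P, norm_prod, neg_div, sub_neg_eq_add]
  refine Finset.prod_lt_prod_of_nonempty_of_nonneg
    ⟨1, Finset.mem_Icc.2 ⟨le_rfl, Nat.one_le_iff_ne_zero.2 hk⟩⟩
    (fun _ _ => norm_nonneg _) fun j hj => norm_one_add_lt_norm_one_sub ?_
  have hj_pos : (0 : ℝ) < j := by exact_mod_cast (Finset.mem_Icc.1 hj).1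
  rw [div_natCast_re]
  exact div_neg_of_neg_of_pos hs hj_pos

theorem P_add_P_neg_ne_zero (k : ℕ) {s : ℂ} (hs : s.re ≠ 0) : P k s + P k (-s) ≠ 0 := by
  rcases eq_or_ne k 0 with rfl | hk
  · norm_num [P]
  intro h
  have hnorm : ‖P k s‖ = ‖P k (-s)‖ := by rw [eq_neg_of_add_eq_zero_left h, norm_neg]
  rcases hs.lt_or_gt with hs | hs
  · exact (norm_P_neg_lt_norm_P hk hs).ne' hnorm
  · have hlt := norm_P_neg_lt_norm_P hk (s := -s) (by simpa using hs)
    rw [neg_neg] at hlt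
    exact hlt.ne hnorm

theorem Pplus_roots_real (k : ℕ) (u v : ℝ) (h : Pplus k (u + I * v) = 0) : v = 0 := by
  by_contra hv
  have hre : (I * (u + I * v)).re ≠ 0 := by simpa using hv
  exact P_add_P_neg_ne_zero k hre (by simpa [Pplus] using h)
end

section
/- If t = u + iv is a complex root of P_k^+ (i.e., |P_k(iu - v)| = |P_k(-iu + v)|), then ∏_{j=1}^k ((j+v)^2 + u^2) = ∏_{j=1}^k ((j-v)^2 + u^2), and if v > 0 with |v| < 1 then each factor on the left strictly exceeds the corresponding factor on the right, a contradiction; hence for k ≥ 1 the equality ∏_{j=1}^k ((j+v)^2+u^2) = ∏_{j=1}^k ((j-v)^2+u^2) with u,v real and |v|<1 forces v = 0. -/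
section

variable {R : Type*} [CommRing R] [LinearOrder R] [IsStrictOrderedRing R]

theorem sq_sub_add_sq_lt_sq_add_add_sq {a b : R} (c : R) (ha : 0 < a) (hb : 0 < b) :
    (a - b) ^ 2 + c ^ 2 < (a + b) ^ 2 + c ^ 2 := by
  nlinarith [mul_pos ha hb]

theorem prod_sq_sub_add_sq_lt_prod_sq_add_add_sq {ι : Type*} {s : Finset ι} (hs : s.Nonempty)
    {a : ι → R} {b : R} (c : R) (hb : 0 < b) (hba : ∀ i ∈ s, b < a i) :
    ∏ i ∈ s, ((a i - b) ^ 2 + c ^ 2) < ∏ i ∈ s, ((a i + b) ^ 2 + c ^ 2) := by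
  refine Finset.prod_lt_prod_of_nonempty (fun i hi => ?_) (fun i hi => ?_) hs
  · have : 0 < a i - b := sub_pos.mpr (hba i hi)
    positivity
  · exact sq_sub_add_sq_lt_sq_add_add_sq c (hb.trans (hba i hi)) hb

end

theorem product_equality_forces_v_zero (k : ℕ) (hk : 1 ≤ k) :
    (∀ u v : ℝ, 0 < v → |v| < 1 → ∀ j ∈ Finset.Icc 1 k,
        (((j : ℝ) - v) ^ 2 + u ^ 2) < (((j : ℝ) + v) ^ 2 + u ^ 2)) ∧
    (∀ u v : ℝ, |v| < 1 →
      ∏ j ∈ Finset.Icc 1 k, (((j : ℝ) + v) ^ 2 + u ^ 2)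
        = ∏ j ∈ Finset.Icc 1 k, (((j : ℝ) - v) ^ 2 + u ^ 2) → v = 0) := by
  have one_le {j : ℕ} (hj : j ∈ Finset.Icc 1 k) : (1 : ℝ) ≤ j := by
    exact_mod_cast (Finset.mem_Icc.mp hj).1
  refine ⟨fun u v hv _ j hj => sq_sub_add_sq_lt_sq_add_add_sq u (by linarith [one_le hj]) hv,
    fun u v hv heq => ?_⟩
  have hs : (Finset.Icc 1 k).Nonempty := Finset.nonempty_Icc.mpr hk
  have lt_of_abs_lt {w : ℝ} (hw : |w| < 1) (j : ℕ) (hj : j ∈ Finset.Icc 1 k) : w < j :=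
    (le_abs_self w).trans_lt (hw.trans_le (one_le hj))
  rcases lt_trichotomy v 0 with hneg | rfl | hpos
  · have := prod_sq_sub_add_sq_lt_prod_sq_add_add_sq hs u (neg_pos.mpr hneg)
      (lt_of_abs_lt (by rwa [abs_neg]))
    simp only [sub_neg_eq_add, ← sub_eq_add_neg] at this
    exact absurd heq this.ne
  · rfl
  · exact absurd heq (prod_sq_sub_add_sq_lt_prod_sq_add_add_sq hs u hpos (lt_of_abs_lt hv)).ne'
end

section
/- For all n ∈ ℕ and all nonzero complex t, ∑_{k=0}^n P_k^+(t)/(k+1) = -P_{n+1}^-(t)/t, where P_k^+ and P_k^- are the even and odd parts of P_k(it). -/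
open Complex

noncomputable def Pminus (k : ℕ) (t : ℂ) : ℂ := (P k (I * t) - P k (-(I * t))) / (2 * I)

/-! Since `P (k + 1) s = P k s * (1 - s / (k + 1))`, each term `s * P k s / (k + 1)` equals
`P k s - P (k + 1) s`, so `s * ∑_{k ≤ n} P k s / (k + 1) = 1 - P (n + 1) s` telescopes.
Taking the difference of the identities at `s = i t` and `s = -i t` leaves the even part on
the left and the odd part on the right. -/

lemma P_zero (s : ℂ) : P 0 s = 1 := by
  simp [P]

lemma P_succ (k : ℕ) (s : ℂ) : P (k + 1) s = P k s * (1 - s / (k + 1)) := by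
  rw [P, Finset.prod_Icc_succ_top (by omega), ← P]
  push_cast
  rfl

lemma mul_P_div_eq_sub (k : ℕ) (s : ℂ) : s * (P k s / (k + 1)) = P k s - P (k + 1) s := by
  rw [P_succ]
  ring

lemma mul_sum_P_div (n : ℕ) (s : ℂ) :
    s * ∑ k ∈ Finset.range (n + 1), P k s / (k + 1) = 1 - P (n + 1) s := by
  rw [Finset.mul_sum]
  simp only [mul_P_div_eq_sub]
  rw [Finset.sum_range_sub', P_zero]

theorem symmetrized_harmonic_sum (n : ℕ) (t : ℂ) (ht : t ≠ 0) :
    ∑ k ∈ Finset.range (n + 1), Pplus k t / (k + 1) = -Pminus (n + 1) t / t := by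
  set A := ∑ k ∈ Finset.range (n + 1), P k (I * t) / (k + 1)
  set B := ∑ k ∈ Finset.range (n + 1), P k (-(I * t)) / (k + 1)
  have hA : I * t * A = 1 - P (n + 1) (I * t) := mul_sum_P_div n (I * t)
  have hB : -(I * t) * B = 1 - P (n + 1) (-(I * t)) := mul_sum_P_div n (-(I * t))
  have hsum : ∑ k ∈ Finset.range (n + 1), Pplus k t / (k + 1) = (A + B) / 2 := by
    simp only [A, B, Pplus, ← Finset.sum_add_distrib, Finset.sum_div]
    exact Finset.sum_congr rfl fun k _ => by ring
  rw [hsum, Pminus, eq_div_iff ht]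
  linear_combination (hA - hB) / (2 * I) - (A + B) * t / 2 * mul_inv_cancel₀ I_ne_zero
end

section
/- For a fixed compact set K ⊂ ℂ and fixed real a, b with b > 0, there exists a constant C such that for all s ∈ K and all k ≥ 1, |P_k((s-a)/b + 1)| ≤ C·k^{-Re((s-a)/b + 1)}. -/
open Finset Real

lemma norm_one_sub_le_exp (w : ℂ) : ‖1 - w‖ ≤ exp (-w.re + ‖w‖ ^ 2) := by
  have hsq : ‖1 - w‖ ^ 2 = 1 + (-2 * w.re + ‖w‖ ^ 2) := by
    simp only [Complex.sq_norm, Complex.normSq_apply, Complex.sub_re, Complex.sub_im,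
      Complex.one_re, Complex.one_im]
    ring
  refine (pow_le_pow_iff_left₀ (norm_nonneg _) (exp_pos _).le two_ne_zero).mp ?_
  calc ‖1 - w‖ ^ 2 ≤ exp (-2 * w.re + ‖w‖ ^ 2) := by
        linarith [add_one_le_exp (-2 * w.re + ‖w‖ ^ 2)]
    _ ≤ exp (2 * (-w.re + ‖w‖ ^ 2)) := exp_le_exp.mpr (by nlinarith [sq_nonneg ‖w‖])
    _ = exp (-w.re + ‖w‖ ^ 2) ^ 2 := by rw [← exp_nat_mul]; norm_num

lemma harmonic_sub_log_mem_Icc {k : ℕ} (hk : k ≠ 0) : (harmonic k : ℝ) - log k ∈ Set.Icc 0 1 := by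
  have hlog : log k ≤ log ↑(k + 1) :=
    log_le_log (by positivity) (by push_cast; linarith)
  constructor
  · linarith [log_add_one_le_harmonic k]
  · linarith [harmonic_le_one_add_log k]

lemma sum_Icc_inv_sq_le_two (k : ℕ) : ∑ j ∈ Icc 1 k, ((j : ℝ) ^ 2)⁻¹ ≤ 2 := by
  have hIcc : Icc 1 k = Ioo 0 (k + 1) := by ext; simp only [mem_Icc, mem_Ioo]; omega
  simpa [hIcc] using sum_Ioo_inv_sq_le (α := ℝ) 0 (k + 1)

lemma norm_P_le_exp (k : ℕ) (z : ℂ) :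
    ‖P k z‖ ≤ exp (-z.re * harmonic k + ‖z‖ ^ 2 * ∑ j ∈ Icc 1 k, ((j : ℝ) ^ 2)⁻¹) := by
  have hexp : -z.re * harmonic k + ‖z‖ ^ 2 * ∑ j ∈ Icc 1 k, ((j : ℝ) ^ 2)⁻¹ =
      ∑ j ∈ Icc 1 k, (-(z / j).re + ‖z / j‖ ^ 2) := by
    simp only [harmonic_eq_sum_Icc, Rat.cast_sum, Rat.cast_inv, Rat.cast_natCast, mul_sum,
      ← sum_add_distrib, Complex.div_natCast_re, norm_div, Complex.norm_natCast, div_pow]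
    exact sum_congr rfl fun j _ => by ring
  rw [hexp, exp_sum, P, norm_prod]
  exact prod_le_prod (fun _ _ => norm_nonneg _) fun j _ => norm_one_sub_le_exp _

lemma norm_P_le_exp_mul_rpow {z : ℂ} {M : ℝ} (hz : ‖z‖ ≤ M) {k : ℕ} (hk : k ≠ 0) :
    ‖P k z‖ ≤ exp (M + 2 * M ^ 2) * (k : ℝ) ^ (-z.re) := by
  obtain ⟨hH₀, hH₁⟩ := harmonic_sub_log_mem_Icc hk
  have hre : |z.re| ≤ M := (Complex.abs_re_le_norm z).trans hz
  have hsq : ‖z‖ ^ 2 ≤ M ^ 2 := pow_le_pow_left₀ (norm_nonneg z) hz 2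
  have hS := sum_Icc_inv_sq_le_two k
  have hS₀ : 0 ≤ ∑ j ∈ Icc 1 k, ((j : ℝ) ^ 2)⁻¹ := sum_nonneg fun _ _ => by positivity
  have hharm : -z.re * harmonic k ≤ -z.re * log k + M := by
    nlinarith [neg_abs_le z.re, le_abs_self z.re]
  calc ‖P k z‖ ≤ exp (-z.re * harmonic k + ‖z‖ ^ 2 * ∑ j ∈ Icc 1 k, ((j : ℝ) ^ 2)⁻¹) :=
        norm_P_le_exp k z
    _ ≤ exp (M + 2 * M ^ 2 + -z.re * log k) := exp_le_exp.mpr (by nlinarith)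
    _ = exp (M + 2 * M ^ 2) * (k : ℝ) ^ (-z.re) := by
        rw [exp_add, rpow_def_of_pos (by positivity), mul_comm (log _)]

theorem pochhammer_uniform_bound_general (K : Set ℂ) (hK : IsCompact K) (a b : ℝ) :
    ∃ C : ℝ, ∀ s ∈ K, ∀ k : ℕ, 1 ≤ k →
      ‖P k ((s - a) / b + 1)‖ ≤ C * (k : ℝ) ^ (-(((s - (a : ℂ)) / (b : ℂ) + 1).re)) := by
  obtain ⟨M, hM⟩ := hK.exists_bound_of_continuousOn
    (f := fun s : ℂ => (s - (a : ℂ)) / (b : ℂ) + 1) (by fun_prop)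
  exact ⟨exp (M + 2 * M ^ 2), fun s hs k hk =>
    norm_P_le_exp_mul_rpow (hM s hs) (Nat.one_le_iff_ne_zero.mp hk)⟩

theorem pochhammer_uniform_bound (K : Set ℂ) (hK : IsCompact K) (a b : ℝ) (hb : 0 < b) :
    ∃ C : ℝ, ∀ s ∈ K, ∀ k : ℕ, 1 ≤ k →
      ‖P k ((s - a) / b + 1)‖ ≤ C * (k : ℝ) ^ (-(((s - (a : ℂ)) / (b : ℂ) + 1).re)) :=
  pochhammer_uniform_bound_general K hK a b
end

section
/- Let A : [1,∞) → ℝ be measurable, nonnegative, and satisfy A(x) ≤ C₂·x^{-m} for some m with 2m + a - 2 > 0. Then the coefficient b_k = ∫_1^∞ A(x)·x^{-a/2}·(1 - x^{-b/2})^k dx (with a, b > 0) satisfies b_k ≤ (2C₂/b)·Γ((2m+a-2)/b)·Γ(k+1)/Γ((2m+a-2)/b + 1 + k), and in particular b_k = O(k^{-(2m+a-2)/b}) as k → ∞. -/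
/-!
On `[1, ∞)` the coefficient is dominated by `C₂ ∫ x ^ (-(m + a/2)) (1 - x ^ (-b/2)) ^ k dx`, and
the substitution `y = x ^ (-b/2)` turns this into `(2 C₂ / b) B(s, k + 1)` with
`s = (2m + a - 2)/b`. The Beta value gives the first bound; for the second,
`(1 - y) ^ k ≤ exp (-k y)` bounds `B(s, k + 1)` by the Gamma integral `Γ(s) k ^ (-s)`.
-/

open MeasureTheory Real Set

theorem integral_Ioo_rpow_mul_one_sub_rpow {s t : ℝ} (hs : 0 < s) (ht : 0 < t) :
    ∫ y in Ioo (0 : ℝ) 1, y ^ (s - 1) * (1 - y) ^ (t - 1)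
      = Gamma s * Gamma t / Gamma (s + t) := by
  rw [← ProbabilityTheory.beta, ProbabilityTheory.beta_eq_betaIntegralReal s t hs ht,
    Complex.betaIntegral, intervalIntegral.integral_of_le zero_le_one,
    ← integral_Ioc_eq_integral_Ioo, ← RCLike.re_to_complex, ← integral_re]
  · refine setIntegral_congr_fun measurableSet_Ioc fun y ⟨hy₀, hy₁⟩ ↦ ?_
    norm_cast
    rw [← Complex.ofReal_cpow hy₀.le, ← Complex.ofReal_cpow (by linarith), RCLike.re_to_complex,
      ← Complex.ofReal_mul, Complex.ofReal_re]
  · have := Complex.betaIntegral_convergent (u := s) (v := t) (by simpa) (by simpa)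
    rwa [intervalIntegrable_iff_integrableOn_Ioc_of_le zero_le_one] at this

theorem integral_Ioi_one_rpow_neg_mul_comp_rpow_neg {q : ℝ} (hq : 0 < q) (c : ℝ) (f : ℝ → ℝ) :
    ∫ x in Ioi (1 : ℝ), x ^ (-c) * f (x ^ (-q))
      = q⁻¹ * ∫ y in Ioo (0 : ℝ) 1, y ^ ((c - 1) / q - 1) * f y := by
  set g : ℝ → ℝ := (Ioo (0 : ℝ) 1).indicator fun y ↦ y ^ ((c - 1) / q - 1) * f y
  have hg : ∫ y in Ioi (0 : ℝ), g y = ∫ y in Ioo (0 : ℝ) 1, y ^ ((c - 1) / q - 1) * f y := by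
    rw [integral_indicator measurableSet_Ioo, Measure.restrict_restrict measurableSet_Ioo,
      inter_eq_left.mpr Ioo_subset_Ioi_self]
  have hcomp : ∀ x ∈ Ioi (0 : ℝ), (|-q| * x ^ (-q - 1)) • g (x ^ (-q))
      = (Ioi (1 : ℝ)).indicator (fun x ↦ q * (x ^ (-c) * f (x ^ (-q)))) x := by
    intro x (hx : 0 < x)
    simp only [g]
    rcases lt_or_ge 1 x with h1 | h1
    · have hmem : x ^ (-q) ∈ Ioo (0 : ℝ) 1 :=
        ⟨rpow_pos_of_pos hx _, rpow_lt_one_of_one_lt_of_neg h1 (neg_neg_of_pos hq)⟩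
      rw [indicator_of_mem (mem_Ioi.mpr h1), indicator_of_mem hmem, smul_eq_mul, abs_neg,
        abs_of_pos hq, ← rpow_mul hx.le]
      have hexp : -q - 1 + -q * ((c - 1) / q - 1) = -c := by field_simp; ring
      rw [← hexp, rpow_add hx]
      ring
    · have hnmem : x ^ (-q) ∉ Ioo (0 : ℝ) 1 := fun h ↦
        (one_le_rpow_of_pos_of_le_one_of_nonpos hx h1 (neg_nonpos.mpr hq.le)).not_gt h.2
      rw [indicator_of_notMem (notMem_Ioi.mpr h1), indicator_of_notMem hnmem, smul_zero]
  have key := integral_comp_rpow_Ioi g (neg_ne_zero.mpr hq.ne')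
  rw [setIntegral_congr_fun measurableSet_Ioi hcomp, hg, integral_indicator measurableSet_Ioi,
    Measure.restrict_restrict measurableSet_Ioi, inter_eq_left.mpr (Ioi_subset_Ioi zero_le_one),
    integral_const_mul] at key
  rw [← key, inv_mul_cancel_left₀ hq.ne']

theorem one_sub_rpow_le_exp_neg_mul {y t : ℝ} (hy : y ≤ 1) (ht : 0 ≤ t) :
    (1 - y) ^ t ≤ exp (-(t * y)) := by
  rw [mul_comm, ← neg_mul, exp_mul]
  exact rpow_le_rpow (by linarith) (by linarith [add_one_le_exp (-y)]) ht

theorem integral_Ioo_rpow_mul_one_sub_rpow_le {s t : ℝ} (hs : 0 < s) (ht : 0 < t) :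
    ∫ y in Ioo (0 : ℝ) 1, y ^ (s - 1) * (1 - y) ^ t ≤ Gamma s * t ^ (-s) := by
  have hint : IntegrableOn (fun y : ℝ ↦ y ^ (s - 1) * exp (-(t * y))) (Ioi 0) := by
    simpa [neg_mul] using integrableOn_rpow_mul_exp_neg_mul_rpow (p := 1) (by linarith) one_pos ht
  calc ∫ y in Ioo (0 : ℝ) 1, y ^ (s - 1) * (1 - y) ^ t
      ≤ ∫ y in Ioo (0 : ℝ) 1, y ^ (s - 1) * exp (-(t * y)) := by
        refine integral_mono_of_nonneg (ae_restrict_of_forall_mem measurableSet_Ioo fun y hy ↦ ?_)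
          (hint.mono_set Ioo_subset_Ioi_self)
          (ae_restrict_of_forall_mem measurableSet_Ioo fun y hy ↦ ?_)
        · exact mul_nonneg (rpow_nonneg hy.1.le _) (rpow_nonneg (by linarith [hy.2]) _)
        · exact mul_le_mul_of_nonneg_left (one_sub_rpow_le_exp_neg_mul hy.2.le ht.le)
            (rpow_nonneg hy.1.le _)
    _ ≤ ∫ y in Ioi (0 : ℝ), y ^ (s - 1) * exp (-(t * y)) :=
        setIntegral_mono_set hint (ae_restrict_of_forall_mem measurableSet_Ioi fun y hy ↦ by
          have : 0 < y := hy; positivity) Ioo_subset_Ioi_self.eventuallyLE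
    _ = Gamma s * t ^ (-s) := by
        rw [integral_rpow_mul_exp_neg_mul_Ioi hs ht, one_div, inv_rpow ht.le, ← rpow_neg ht.le,
          mul_comm]

theorem integral_Ioi_mul_rpow_mul_one_sub_rpow_pow_le {a b m C : ℝ} {A : ℝ → ℝ} (hb : 0 < b)
    (hma : 0 < 2 * m + a - 2) (hA₀ : ∀ x, 1 ≤ x → 0 ≤ A x) (hA : ∀ x, 1 ≤ x → A x ≤ C * x ^ (-m))
    (k : ℕ) :
    ∫ x in Ioi (1 : ℝ), A x * x ^ (-(a / 2)) * (1 - x ^ (-(b / 2))) ^ k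
      ≤ 2 * C / b * ∫ y in Ioo (0 : ℝ) 1, y ^ ((2 * m + a - 2) / b - 1) * (1 - y) ^ (k : ℝ) := by
  set c := m + a / 2 with hc
  have hbounds : ∀ x : ℝ, 1 ≤ x →
      0 ≤ (1 - x ^ (-(b / 2))) ^ k ∧ (1 - x ^ (-(b / 2))) ^ k ≤ 1 := by
    intro x hx
    have h₁ : x ^ (-(b / 2)) ≤ 1 := rpow_le_one_of_one_le_of_nonpos hx (by linarith)
    have h₀ : 0 ≤ x ^ (-(b / 2)) := rpow_nonneg (by linarith) _
    exact ⟨pow_nonneg (by linarith) _, pow_le_one₀ (by linarith) (by linarith)⟩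
  have hint : IntegrableOn (fun x : ℝ ↦ x ^ (-c) * (1 - x ^ (-(b / 2))) ^ k) (Ioi 1) := by
    refine (integrableOn_Ioi_rpow_of_lt (by linarith : -c < -1) zero_lt_one).mono'
      (by fun_prop : Measurable _).aestronglyMeasurable
      (ae_restrict_of_forall_mem measurableSet_Ioi fun x (hx : 1 < x) ↦ ?_)
    obtain ⟨h₀, h₁⟩ := hbounds x hx.le
    rw [norm_mul, norm_of_nonneg (rpow_nonneg (by linarith) _), norm_of_nonneg h₀]
    exact mul_le_of_le_one_right (rpow_nonneg (by linarith) _) h₁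
  calc ∫ x in Ioi (1 : ℝ), A x * x ^ (-(a / 2)) * (1 - x ^ (-(b / 2))) ^ k
      ≤ ∫ x in Ioi (1 : ℝ), C * (x ^ (-c) * (1 - x ^ (-(b / 2))) ^ k) := by
        refine integral_mono_of_nonneg
          (ae_restrict_of_forall_mem measurableSet_Ioi fun x (hx : 1 < x) ↦ ?_) (hint.const_mul C)
          (ae_restrict_of_forall_mem measurableSet_Ioi fun x (hx : 1 < x) ↦ ?_)
        · exact mul_nonneg (mul_nonneg (hA₀ x hx.le) (rpow_nonneg (by linarith) _))
            (hbounds x hx.le).1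
        · have hx₀ : 0 < x := by linarith
          calc A x * x ^ (-(a / 2)) * (1 - x ^ (-(b / 2))) ^ k
              ≤ C * x ^ (-m) * x ^ (-(a / 2)) * (1 - x ^ (-(b / 2))) ^ k := by
                gcongr
                · exact (hbounds x hx.le).1
                · exact hA x hx.le
            _ = C * (x ^ (-c) * (1 - x ^ (-(b / 2))) ^ k) := by
                rw [show -c = -m + -(a / 2) by ring, rpow_add hx₀]
                ring
    _ = C * ((b / 2)⁻¹ *
          ∫ y in Ioo (0 : ℝ) 1, y ^ ((c - 1) / (b / 2) - 1) * (1 - y) ^ (k : ℝ)) := by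
        rw [integral_const_mul, ← integral_Ioi_one_rpow_neg_mul_comp_rpow_neg (half_pos hb)]
        simp only [rpow_natCast]
    _ = 2 * C / b * ∫ y in Ioo (0 : ℝ) 1, y ^ ((2 * m + a - 2) / b - 1) * (1 - y) ^ (k : ℝ) := by
        rw [show (c - 1) / (b / 2) = (2 * m + a - 2) / b by field_simp; ring]
        field_simp

theorem coefficient_bound_general (a b m C₂ : ℝ) (hb : 0 < b)
    (hC₂ : 0 < C₂) (hma : 0 < 2 * m + a - 2)
    (A : ℝ → ℝ) (hnn : ∀ x, 1 ≤ x → 0 ≤ A x)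
    (hbound : ∀ x, 1 ≤ x → A x ≤ C₂ * x ^ (-m)) :
    (∀ k : ℕ,
      ∫ x in Set.Ioi (1 : ℝ), A x * x ^ (-(a / 2)) * (1 - x ^ (-(b / 2))) ^ k
        ≤ (2 * C₂ / b) * (Real.Gamma ((2 * m + a - 2) / b) * Real.Gamma (k + 1)
            / Real.Gamma ((2 * m + a - 2) / b + 1 + k))) ∧
    ∃ C : ℝ, ∀ k : ℕ, 1 ≤ k →
      ∫ x in Set.Ioi (1 : ℝ), A x * x ^ (-(a / 2)) * (1 - x ^ (-(b / 2))) ^ k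
        ≤ C * (k : ℝ) ^ (-((2 * m + a - 2) / b)) := by
  set s := (2 * m + a - 2) / b
  have hs : 0 < s := div_pos hma hb
  have hcoeff := integral_Ioi_mul_rpow_mul_one_sub_rpow_pow_le hb hma hnn hbound
  refine ⟨fun k ↦ ?_, 2 * C₂ / b * Gamma s, fun k hk ↦ ?_⟩
  · have hbeta := integral_Ioo_rpow_mul_one_sub_rpow hs (t := k + 1) (by positivity)
    rw [add_sub_cancel_right, show s + ((k : ℝ) + 1) = s + 1 + k by ring] at hbeta
    exact hbeta ▸ hcoeff k
  · calc _ ≤ _ := hcoeff k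
      _ ≤ 2 * C₂ / b * (Gamma s * (k : ℝ) ^ (-s)) := by
        gcongr
        exact integral_Ioo_rpow_mul_one_sub_rpow_le hs (by exact_mod_cast hk)
      _ = 2 * C₂ / b * Gamma s * (k : ℝ) ^ (-s) := by ring

theorem coefficient_bound (a b m C₂ : ℝ) (ha : 0 < a) (hb : 0 < b) (hm : 0 < m)
    (hC₂ : 0 < C₂) (hma : 0 < 2 * m + a - 2)
    (A : ℝ → ℝ) (hmeas : Measurable A) (hnn : ∀ x, 1 ≤ x → 0 ≤ A x)
    (hbound : ∀ x, 1 ≤ x → A x ≤ C₂ * x ^ (-m)) :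
    (∀ k : ℕ,
      ∫ x in Set.Ioi (1 : ℝ), A x * x ^ (-(a / 2)) * (1 - x ^ (-(b / 2))) ^ k
        ≤ (2 * C₂ / b) * (Real.Gamma ((2 * m + a - 2) / b) * Real.Gamma (k + 1)
            / Real.Gamma ((2 * m + a - 2) / b + 1 + k))) ∧
    ∃ C : ℝ, ∀ k : ℕ, 1 ≤ k →
      ∫ x in Set.Ioi (1 : ℝ), A x * x ^ (-(a / 2)) * (1 - x ^ (-(b / 2))) ^ k
        ≤ C * (k : ℝ) ^ (-((2 * m + a - 2) / b)) :=
  coefficient_bound_general a b m C₂ hb hC₂ hma A hnn hbound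
end

section
/- For a > 0 and ε_n > 0 with ε_n·log n → ∞ (i.e., 1/ε_n = o(log n)), the integral I_n = ∫_0^1 exp(-a·y^{-ε_n})·(1-y)^{n+1}/y dy satisfies ε_n·I_n → 0 as n → ∞. Consequently, the remainder R_n(0, β_n) = (4/β_n)·I_n with ε_n = 2/β_n tends to 0 whenever β_n = o(log n). -/
/-!
Since `exp (-t) ≤ t⁻¹`, the integrand is at most `(1 - y) ^ m * y ^ (ε - 1) / a`. Splitting at
`δ ∈ (0, 1]`, the part over `[0, δ]` contributes at most `δ ^ ε / (a ε)`, and since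
`(1 - y) ^ m ≤ exp (-m δ)` on `[δ, 1]` the rest contributes at most `exp (-m δ) / (a ε)`.
Taking `δ = 1 / √n`, we get `δ ^ ε = exp (-ε log n / 2) → 0` because `ε log n → ∞`,
and `exp (-(n + 1) δ) ≤ exp (-√n) → 0`.
-/

open Real Filter Asymptotics MeasureTheory Set Topology intervalIntegral

lemma exp_neg_le_inv {t : ℝ} (ht : 0 < t) : exp (-t) ≤ t⁻¹ := by
  rw [exp_neg]
  exact inv_anti₀ ht (by linarith [add_one_le_exp t])

lemma exp_neg_mul_rpow_neg_le {a : ℝ} (ha : 0 < a) (ε : ℝ) {y : ℝ} (hy : 0 < y) :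
    exp (-a * y ^ (-ε)) ≤ y ^ ε / a := by
  rw [neg_mul]
  convert exp_neg_le_inv (mul_pos ha (rpow_pos_of_pos hy (-ε))) using 1
  rw [mul_inv, rpow_neg hy.le, inv_inv, div_eq_mul_inv, mul_comm]

lemma one_sub_pow_le_exp_neg_mul {δ y : ℝ} (m : ℕ) (hδy : δ ≤ y) (hy1 : y ≤ 1) :
    (1 - y) ^ m ≤ exp (-(m * δ)) := calc
  (1 - y) ^ m ≤ exp (-y) ^ m := pow_le_pow_left₀ (by linarith) (one_sub_le_exp_neg y) m
  _ = exp (-(m * y)) := by rw [← exp_nat_mul, mul_neg]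
  _ ≤ exp (-(m * δ)) := exp_le_exp.mpr (neg_le_neg (mul_le_mul_of_nonneg_left hδy m.cast_nonneg))

lemma integral_rpow_sub_one {ε : ℝ} (hε : 0 < ε) (b c : ℝ) :
    ∫ y in b..c, y ^ (ε - 1) = (c ^ ε - b ^ ε) / ε := by
  rw [integral_rpow (Or.inl (by linarith)), sub_add_cancel]

lemma tendsto_div_atTop_of_isLittleO {α : Type*} {l : Filter α} {f g : α → ℝ}
    (hf : ∀ᶠ x in l, 0 < f x) (hg : ∀ᶠ x in l, 0 < g x) (h : f =o[l] g) :
    Tendsto (fun x => g x / f x) l atTop := by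
  have hpos : Tendsto (fun x => f x / g x) l (𝓝[>] 0) :=
    tendsto_nhdsWithin_iff.mpr ⟨h.tendsto_div_nhds_zero, by
      filter_upwards [hf, hg] with x hfx hgx using div_pos hfx hgx⟩
  exact hpos.inv_tendsto_nhdsGT_zero.congr fun x => inv_div _ _

noncomputable def remainderIntegrand (a ε : ℝ) (m : ℕ) (y : ℝ) : ℝ :=
  exp (-a * y ^ (-ε)) * (1 - y) ^ m / y

section remainderIntegrand

variable {a ε : ℝ} {m : ℕ}

lemma remainderIntegrand_nonneg {y : ℝ} (hy : y ∈ Icc 0 1) : 0 ≤ remainderIntegrand a ε m y :=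
  div_nonneg (mul_nonneg (exp_pos _).le (pow_nonneg (by linarith [hy.2]) _)) hy.1

lemma remainderIntegrand_le (ha : 0 < a) {y c : ℝ} (hy : y ∈ Ioc 0 1) (hc : (1 - y) ^ m ≤ c) :
    remainderIntegrand a ε m y ≤ c / a * y ^ (ε - 1) := calc
  remainderIntegrand a ε m y ≤ y ^ ε / a * c / y := by
    unfold remainderIntegrand
    have hy0 : 0 < y := hy.1
    have h1y : 0 ≤ (1 - y) ^ m := pow_nonneg (by linarith [hy.2]) _
    gcongr
    exact exp_neg_mul_rpow_neg_le ha ε hy0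
  _ = c / a * y ^ (ε - 1) := by rw [rpow_sub_one hy.1.ne']; ring

lemma intervalIntegrable_remainderIntegrand (ha : 0 < a) (hε : 0 < ε) :
    IntervalIntegrable (remainderIntegrand a ε m) volume 0 1 := by
  refine ((intervalIntegrable_rpow' (r := ε - 1) (by linarith)).const_mul (1 / a)).mono_fun'
    ?_ ?_
  · exact (by unfold remainderIntegrand; fun_prop : Measurable _).aestronglyMeasurable
  rw [EventuallyLE, ae_restrict_iff' measurableSet_uIoc]
  refine .of_forall fun y hy => ?_
  rw [uIoc_of_le zero_le_one] at hy
  rw [norm_of_nonneg (remainderIntegrand_nonneg (Ioc_subset_Icc_self hy))]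
  exact remainderIntegrand_le ha hy (pow_le_one₀ (by linarith [hy.2]) (by linarith [hy.1]))

theorem mul_integral_remainderIntegrand_le (ha : 0 < a) (hε : 0 < ε) (m : ℕ) {δ : ℝ}
    (hδ0 : 0 < δ) (hδ1 : δ ≤ 1) :
    ε * ∫ y in (0 : ℝ)..1, remainderIntegrand a ε m y ≤ (δ ^ ε + exp (-(m * δ))) / a := by
  have hf := intervalIntegrable_remainderIntegrand (m := m) ha hε
  have hδ : δ ∈ uIcc (0 : ℝ) 1 := by rw [uIcc_of_le zero_le_one]; exact ⟨hδ0.le, hδ1⟩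
  have hpow (K b c : ℝ) : IntervalIntegrable (fun y => K * y ^ (ε - 1)) volume b c :=
    (intervalIntegrable_rpow' (by linarith)).const_mul K
  have near : ∫ y in (0 : ℝ)..δ, remainderIntegrand a ε m y ≤ 1 / a * (δ ^ ε / ε) := calc
    _ ≤ ∫ y in (0 : ℝ)..δ, 1 / a * y ^ (ε - 1) :=
      integral_mono_on_of_le_Ioo hδ0.le
        (hf.mono_set (uIcc_subset_uIcc left_mem_uIcc hδ)) (hpow _ _ _) fun y hy =>
        remainderIntegrand_le ha ⟨hy.1, by linarith [hy.2]⟩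
          (pow_le_one₀ (by linarith [hy.2]) (by linarith [hy.1]))
    _ = 1 / a * (δ ^ ε / ε) := by
      rw [intervalIntegral.integral_const_mul, integral_rpow_sub_one hε, zero_rpow hε.ne',
        sub_zero]
  have far : ∫ y in δ..1, remainderIntegrand a ε m y ≤ exp (-(m * δ)) / a * (1 / ε) := calc
    _ ≤ ∫ y in δ..1, exp (-(m * δ)) / a * y ^ (ε - 1) :=
      integral_mono_on_of_le_Ioo hδ1
        (hf.mono_set (uIcc_subset_uIcc hδ right_mem_uIcc)) (hpow _ _ _) fun y hy =>
        remainderIntegrand_le ha ⟨hδ0.trans hy.1, hy.2.le⟩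
          (one_sub_pow_le_exp_neg_mul m hy.1.le hy.2.le)
    _ = exp (-(m * δ)) / a * ((1 - δ ^ ε) / ε) := by
      rw [intervalIntegral.integral_const_mul, integral_rpow_sub_one hε, one_rpow]
    _ ≤ exp (-(m * δ)) / a * (1 / ε) := by
      gcongr
      linarith [rpow_nonneg hδ0.le ε]
  rw [← integral_add_adjacent_intervals
    (hf.mono_set (uIcc_subset_uIcc left_mem_uIcc hδ))
    (hf.mono_set (uIcc_subset_uIcc hδ right_mem_uIcc))]
  calc ε * (_ + _) ≤ ε * (1 / a * (δ ^ ε / ε) + exp (-(m * δ)) / a * (1 / ε)) := by gcongr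
    _ = (δ ^ ε + exp (-(m * δ))) / a := by field_simp

end remainderIntegrand

theorem tendsto_mul_integral_remainderIntegrand {a : ℝ} (ha : 0 < a) {ε : ℕ → ℝ}
    (hε : ∀ n, 0 < ε n) (hlog : Tendsto (fun n : ℕ => ε n * log n) atTop atTop) :
    Tendsto (fun n : ℕ => ε n * ∫ y in (0 : ℝ)..1, remainderIntegrand a (ε n) (n + 1) y)
      atTop (𝓝 0) := by
  set δ : ℕ → ℝ := fun n => (√n)⁻¹
  have hδ_pow : Tendsto (fun n => δ n ^ ε n) atTop (𝓝 0) := by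
    refine (tendsto_exp_atBot.comp (tendsto_neg_atTop_atBot.comp
      (hlog.atTop_div_const two_pos))).congr' ?_
    filter_upwards [eventually_ge_atTop 1] with n hn
    have hn' : (0 : ℝ) < √n := sqrt_pos.mpr (by exact_mod_cast hn)
    rw [rpow_def_of_pos (inv_pos.mpr hn'), log_inv, log_sqrt n.cast_nonneg]
    simp only [Function.comp_apply]
    ring_nf
  have hδ_exp : Tendsto (fun n : ℕ => exp (-(((n + 1 : ℕ) : ℝ) * δ n))) atTop (𝓝 0) := by
    refine tendsto_exp_neg_atTop_nhds_zero.comp (tendsto_atTop_mono (fun n => ?_)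
      (tendsto_sqrt_atTop.comp tendsto_natCast_atTop_atTop))
    calc √(n : ℝ) = n / √n := div_sqrt.symm
      _ ≤ ((n + 1 : ℕ) : ℝ) * δ n := by
        rw [div_eq_mul_inv]; gcongr; linarith
  have hbound : ∀ᶠ n in atTop, ε n * ∫ y in (0 : ℝ)..1, remainderIntegrand a (ε n) (n + 1) y ≤
      (δ n ^ ε n + exp (-(((n + 1 : ℕ) : ℝ) * δ n))) / a := by
    filter_upwards [eventually_ge_atTop 1] with n hn
    have hn' : (1 : ℝ) ≤ √n := one_le_sqrt.mpr (by exact_mod_cast hn)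
    exact mul_integral_remainderIntegrand_le ha (hε n) (n + 1)
      (inv_pos.mpr (by linarith)) (inv_le_one_of_one_le₀ hn')
  refine squeeze_zero' (.of_forall fun n => mul_nonneg (hε n).le
    (intervalIntegral.integral_nonneg zero_le_one fun y hy => remainderIntegrand_nonneg hy))
    hbound ?_
  simpa using (hδ_pow.add hδ_exp).div_const a

theorem remainder_integral_tendsto_zero (a : ℝ) (ha : 0 < a) :
    (∀ ε : ℕ → ℝ, (∀ n, 0 < ε n) →
      Tendsto (fun n : ℕ => ε n * Real.log n) atTop atTop →
      Tendsto (fun n : ℕ => ε n *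
          ∫ y in (0 : ℝ)..1, Real.exp (-a * y ^ (-(ε n))) * (1 - y) ^ (n + 1) / y)
        atTop (nhds 0)) ∧
    (∀ β : ℕ → ℝ, (∀ n, 0 < β n) →
      (fun n : ℕ => β n) =o[atTop] (fun n : ℕ => Real.log n) →
      Tendsto (fun n : ℕ => (4 / β n) *
          ∫ y in (0 : ℝ)..1, Real.exp (-a * y ^ (-(2 / β n))) * (1 - y) ^ (n + 1) / y)
        atTop (nhds 0)) := by
  refine ⟨fun ε hε hlog => tendsto_mul_integral_remainderIntegrand ha hε hlog,
    fun β hβ hβo => ?_⟩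
  have hlog : Tendsto (fun n : ℕ => 2 / β n * log n) atTop atTop := by
    have hlog_pos : ∀ᶠ n : ℕ in atTop, 0 < log n := by
      filter_upwards [eventually_ge_atTop 2] with n hn
      exact log_pos (by exact_mod_cast hn)
    refine ((tendsto_div_atTop_of_isLittleO (.of_forall hβ) hlog_pos hβo).const_mul_atTop
      two_pos).congr fun n => ?_
    ring
  have := (tendsto_mul_integral_remainderIntegrand ha (fun n => div_pos two_pos (hβ n))
    hlog).const_mul 2
  rw [mul_zero] at this
  exact this.congr fun n => by unfold remainderIntegrand; ring
end

section
/- Let w > 0, a = w·B with β_n = B·log n, and I(n, a) = ∫_{n^{-a}}^1 (1-y)^{n+1}/y dy. Then for 0 < a ≤ 1 the quantity I(n,a)/(n^{a-1}) stays bounded (so I(n,a) → 0 when a < 1 and is O(1)-bounded for a = 1 up to a log factor), while for a > 1, I(n,a) ~ (a-1)·log n → ∞; hence the remainder R_n(0, β_n) = (4/β_n)·I(n,a) → 0 if and only if a ≤ 1. -/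
/-!
Expanding `(1 - y) ^ m / y = 1 / y - ∑ k < m, (1 - y) ^ k` gives
`∫ y in c..1, (1 - y) ^ m / y = -log c - ∑ k < m, (1 - c) ^ (k + 1) / (k + 1)`, and Bernoulli's
inequality puts that sum within `m * c` of the harmonic number `H_m`. With `c = n ^ (-a)` and
`m = n + 1` this gives `I(n, a) = (a - 1) log n + O(1)` for `a ≥ 1`, as `(n + 1) n ^ (-a) ≤ 2`.
Bounding `1 / y` by `1 / c` instead gives `0 ≤ I(n, a) ≤ n ^ a / (n + 2) ≤ n ^ (a - 1)`, which
settles `a ≤ 1`. Since `β_n = B log n`, the remainder `4 I(n, a) / β_n` therefore tends to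
`4 (a - 1) / B ≠ 0` when `a > 1` and to `0` when `a ≤ 1`.
-/

open Real Filter Asymptotics intervalIntegral

theorem integral_one_sub_pow (c : ℝ) (k : ℕ) :
    ∫ y in c..1, (1 - y) ^ k = (1 - c) ^ (k + 1) / (k + 1) := by
  rw [integral_comp_sub_left (fun x => x ^ k), sub_self, integral_pow]
  ring

section OneSubPowDivIntegral

variable {c : ℝ}

theorem integral_one_sub_pow_div_self_eq (hc0 : 0 < c) (hc1 : c ≤ 1) (m : ℕ) :
    ∫ y in c..1, (1 - y) ^ m / y
      = -log c - ∑ k ∈ Finset.range m, (1 - c) ^ (k + 1) / (k + 1) := by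
  have hpos : ∀ y ∈ Set.uIcc c 1, 0 < y := fun y hy =>
    hc0.trans_le (Set.uIcc_of_le hc1 ▸ hy).1
  have hgeom : Set.EqOn (fun y => (1 - y) ^ m / y)
      (fun y => 1 / y - ∑ k ∈ Finset.range m, (1 - y) ^ k) (Set.uIcc c 1) := by
    intro y hy
    have := mul_neg_geom_sum (1 - y) m
    rw [sub_sub_cancel] at this
    field_simp [(hpos y hy).ne']
    linear_combination this
  have hne : ∀ y ∈ Set.uIcc c 1, y ≠ 0 := fun y hy => (hpos y hy).ne'
  rw [integral_congr hgeom,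
    integral_sub (intervalIntegrable_one_div hne continuousOn_id)
      (Continuous.intervalIntegrable (by fun_prop) _ _),
    integral_one_div fun h => hne 0 h rfl,
    integral_finsetSum fun k _ => Continuous.intervalIntegrable (by fun_prop) _ _]
  simp only [integral_one_sub_pow, one_div, log_inv]

theorem integral_one_sub_pow_div_self_nonneg (hc0 : 0 < c) (hc1 : c ≤ 1) (m : ℕ) :
    0 ≤ ∫ y in c..1, (1 - y) ^ m / y :=
  integral_nonneg hc1 fun y hy =>
    div_nonneg (pow_nonneg (by linarith [hy.2]) m) (hc0.trans_le hy.1).le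

theorem integral_one_sub_pow_div_self_le (hc0 : 0 < c) (hc1 : c ≤ 1) (m : ℕ) :
    ∫ y in c..1, (1 - y) ^ m / y ≤ 1 / (c * (m + 1)) := by
  have hdom : ∀ y ∈ Set.Icc c 1, (1 - y) ^ m / y ≤ (1 - y) ^ m / c := fun y hy =>
    div_le_div_of_nonneg_left (pow_nonneg (by linarith [hy.2]) m) hc0 hy.1
  have hint : IntervalIntegrable (fun y => (1 - y) ^ m / y) MeasureTheory.volume c 1 :=
    (ContinuousOn.div (by fun_prop) continuousOn_id fun y hy =>
      (hc0.trans_le (Set.uIcc_of_le hc1 ▸ hy).1).ne').intervalIntegrable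
  calc ∫ y in c..1, (1 - y) ^ m / y
      ≤ ∫ y in c..1, (1 - y) ^ m / c :=
        integral_mono_on hc1 hint (Continuous.intervalIntegrable (by fun_prop) _ _) hdom
    _ = (1 - c) ^ (m + 1) / (c * (m + 1)) := by
      rw [integral_div, integral_one_sub_pow, div_div, mul_comm]
    _ ≤ 1 / (c * (m + 1)) := by
      gcongr
      exact pow_le_one₀ (by linarith) (by linarith)

theorem sum_one_sub_pow_div_le_harmonic (hc0 : 0 ≤ c) (hc1 : c ≤ 1) (m : ℕ) :
    ∑ k ∈ Finset.range m, (1 - c) ^ (k + 1) / (k + 1) ≤ harmonic m := by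
  rw [harmonic, Rat.cast_sum]
  refine Finset.sum_le_sum fun k _ => ?_
  rw [Rat.cast_inv, Rat.cast_natCast, Nat.cast_succ, inv_eq_one_div]
  gcongr
  exact pow_le_one₀ (by linarith) (by linarith)

theorem harmonic_sub_mul_le_sum_one_sub_pow_div (hc : c ≤ 2) (m : ℕ) :
    harmonic m - m * c ≤ ∑ k ∈ Finset.range m, (1 - c) ^ (k + 1) / (k + 1) := by
  have hterm : ∀ k ∈ Finset.range m,
      ((k : ℝ) + 1)⁻¹ - c ≤ (1 - c) ^ (k + 1) / (k + 1) := by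
    intro k _
    have hbern := one_add_mul_le_pow (a := -c) (by linarith) (k + 1)
    simp only [← sub_eq_add_neg, mul_neg] at hbern
    push_cast at hbern
    rw [le_div_iff₀ (by positivity), sub_mul, inv_mul_cancel₀ (by positivity)]
    linarith
  calc (harmonic m : ℝ) - m * c = ∑ k ∈ Finset.range m, (((k : ℝ) + 1)⁻¹ - c) := by
        simp [harmonic, Finset.sum_sub_distrib]
    _ ≤ _ := Finset.sum_le_sum hterm

theorem abs_integral_one_sub_pow_div_self_add_log_add_harmonic_le (hc0 : 0 < c) (hc1 : c ≤ 1)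
    (m : ℕ) : |(∫ y in c..1, (1 - y) ^ m / y) + log c + harmonic m| ≤ m * c := by
  have hupper := sum_one_sub_pow_div_le_harmonic hc0.le hc1 m
  have hlower := harmonic_sub_mul_le_sum_one_sub_pow_div (hc1.trans one_le_two) m
  rw [integral_one_sub_pow_div_self_eq hc0 hc1, abs_le]
  constructor <;> linarith

end OneSubPowDivIntegral

theorem abs_harmonic_succ_sub_log_le (n : ℕ) : |(harmonic (n + 1) : ℝ) - log n| ≤ 2 := by
  have hupper := harmonic_le_one_add_log n
  have hlower := log_add_one_le_harmonic n
  have hlog : log n ≤ log ↑(n + 1) := by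
    rcases n.eq_zero_or_pos with rfl | hn
    · simp
    · exact log_le_log (by positivity) (by push_cast; linarith)
  have hinv : ((n + 1 : ℕ) : ℝ)⁻¹ ≤ 1 := inv_le_one_of_one_le₀ (by simp)
  rw [harmonic_succ, Rat.cast_add, Rat.cast_inv, Rat.cast_natCast, abs_le]
  constructor <;> linarith [inv_nonneg.mpr (Nat.cast_nonneg (α := ℝ) (n + 1))]

theorem Asymptotics.isEquivalent_of_sub_isBigO_one {α : Type*} {l : Filter α} {u v : α → ℝ}
    (huv : (u - v) =O[l] fun _ => (1 : ℝ)) (hv : Tendsto v l atTop) : u ~[l] v :=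
  huv.trans_isLittleO (isLittleO_const_left.mpr (Or.inr (tendsto_norm_atTop_atTop.comp hv)))

noncomputable def sinRemainderIntegral (a : ℝ) (n : ℕ) : ℝ :=
  ∫ y in ((n : ℝ) ^ (-a))..1, (1 - y) ^ (n + 1) / y

section SinRemainderIntegral

variable {a : ℝ} {n : ℕ}

theorem sinRemainderIntegral_nonneg (ha : 0 ≤ a) (hn : 1 ≤ n) :
    0 ≤ sinRemainderIntegral a n :=
  integral_one_sub_pow_div_self_nonneg (rpow_pos_of_pos (by positivity) _)
    (rpow_le_one_of_one_le_of_nonpos (by exact_mod_cast hn) (by linarith)) _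

theorem sinRemainderIntegral_le (ha : 0 ≤ a) (hn : 1 ≤ n) :
    sinRemainderIntegral a n ≤ (n : ℝ) ^ (a - 1) := by
  have hn0 : (0 : ℝ) < n := by positivity
  calc sinRemainderIntegral a n ≤ 1 / ((n : ℝ) ^ (-a) * ((n + 1 : ℕ) + 1)) :=
        integral_one_sub_pow_div_self_le (rpow_pos_of_pos hn0 _)
          (rpow_le_one_of_one_le_of_nonpos (by exact_mod_cast hn) (by linarith)) _
    _ ≤ 1 / ((n : ℝ) ^ (-a) * n) := by gcongr; push_cast; linarith
    _ = (n : ℝ) ^ (a - 1) := by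
        rw [rpow_neg hn0.le, rpow_sub hn0, rpow_one]
        field_simp

theorem isBigO_sinRemainderIntegral (ha : 0 ≤ a) :
    sinRemainderIntegral a =O[atTop] fun n : ℕ => (n : ℝ) ^ (a - 1) := by
  refine IsBigO.of_bound 1 ?_
  filter_upwards [eventually_ge_atTop 1] with n hn
  rw [norm_of_nonneg (sinRemainderIntegral_nonneg ha hn), norm_of_nonneg (by positivity), one_mul]
  exact sinRemainderIntegral_le ha hn

theorem abs_sinRemainderIntegral_sub_le (ha : 1 ≤ a) (hn : 1 ≤ n) :
    |sinRemainderIntegral a n - (a - 1) * log n| ≤ 4 := by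
  have hn1 : (1 : ℝ) ≤ n := by exact_mod_cast hn
  have hn0 : (0 : ℝ) < n := by positivity
  have herr := abs_integral_one_sub_pow_div_self_add_log_add_harmonic_le
    (rpow_pos_of_pos hn0 (-a)) (rpow_le_one_of_one_le_of_nonpos hn1 (by linarith)) (n + 1)
  have hharm := abs_harmonic_succ_sub_log_le n
  have hsmall : ((n + 1 : ℕ) : ℝ) * (n : ℝ) ^ (-a) ≤ 2 :=
    calc ((n + 1 : ℕ) : ℝ) * (n : ℝ) ^ (-a) ≤ (n + n) * (n : ℝ) ^ (-1 : ℝ) := by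
          gcongr
          push_cast
          linarith
      _ = 2 := by rw [rpow_neg_one]; field_simp; ring
  rw [log_rpow hn0] at herr
  unfold sinRemainderIntegral
  rw [abs_le] at *
  constructor <;> linarith

theorem isEquivalent_sinRemainderIntegral (ha : 1 < a) :
    sinRemainderIntegral a ~[atTop] fun n : ℕ => (a - 1) * log n := by
  refine isEquivalent_of_sub_isBigO_one (IsBigO.of_bound 4 ?_)
    ((tendsto_log_atTop.comp tendsto_natCast_atTop_atTop).const_mul_atTop (by linarith))
  filter_upwards [eventually_ge_atTop 1] with n hn
  rw [norm_one, mul_one]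
  exact abs_sinRemainderIntegral_sub_le ha.le hn

theorem tendsto_div_mul_sinRemainderIntegral_of_one_lt (C : ℝ) {B : ℝ} (hB : B ≠ 0)
    (ha : 1 < a) :
    Tendsto (fun n : ℕ => C / (B * log n) * sinRemainderIntegral a n) atTop
      (nhds (C * (a - 1) / B)) := by
  have hconst : (fun n : ℕ => C / (B * log n) * ((a - 1) * log n)) =ᶠ[atTop]
      fun _ => C * (a - 1) / B := by
    filter_upwards [eventually_gt_atTop 1] with n hn
    have hlog : log n ≠ 0 := (log_pos (by exact_mod_cast hn)).ne'
    field_simp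
  exact (IsEquivalent.refl.mul (isEquivalent_sinRemainderIntegral ha)).symm.tendsto_nhds
    (tendsto_const_nhds.congr' hconst.symm)

theorem tendsto_div_mul_sinRemainderIntegral_of_le_one (C : ℝ) {B : ℝ} (hB : 0 < B)
    (ha0 : 0 ≤ a) (ha1 : a ≤ 1) :
    Tendsto (fun n : ℕ => C / (B * log n) * sinRemainderIntegral a n) atTop (nhds 0) := by
  have hdiv : Tendsto (fun n : ℕ => C / (B * log n)) atTop (nhds 0) :=
    tendsto_const_nhds.div_atTop
      ((tendsto_log_atTop.comp tendsto_natCast_atTop_atTop).const_mul_atTop hB)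
  have hbdd : sinRemainderIntegral a =O[atTop] fun _ => (1 : ℝ) := by
    refine (isBigO_sinRemainderIntegral ha0).trans (IsBigO.of_bound 1 ?_)
    filter_upwards [eventually_ge_atTop 1] with n hn
    rw [norm_of_nonneg (by positivity), norm_one, one_mul]
    exact rpow_le_one_of_one_le_of_nonpos (by exact_mod_cast hn) (by linarith)
  exact ((isBigO_refl _ _).mul hbdd).trans_tendsto (by simpa using hdiv)

end SinRemainderIntegral

theorem sin_case_convergence (w B a : ℝ) (hw : 0 < w) (hB : 0 < B) (ha : a = w * B)
    (β : ℕ → ℝ) (hβ : ∀ n, β n = B * Real.log n)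
    (I : ℕ → ℝ) (hI : ∀ n, I n = ∫ y in ((n : ℝ) ^ (-a))..1, (1 - y) ^ (n + 1) / y) :
    (0 < a → a ≤ 1 → I =O[atTop] (fun n : ℕ => (n : ℝ) ^ (a - 1))) ∧
    (0 < a → a < 1 → Tendsto I atTop (nhds 0)) ∧
    (1 < a → (I ~[atTop] fun n : ℕ => (a - 1) * Real.log n) ∧ Tendsto I atTop atTop) ∧
    (Tendsto (fun n : ℕ => (4 / β n) * I n) atTop (nhds 0) ↔ a ≤ 1) := by
  obtain rfl : I = sinRemainderIntegral a := funext hI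
  obtain rfl : β = fun n : ℕ => B * log n := funext hβ
  have ha0 : 0 ≤ a := ha ▸ (mul_pos hw hB).le
  refine ⟨fun _ _ => isBigO_sinRemainderIntegral ha0, fun _ ha1 => ?_, fun ha1 => ?_,
    ⟨fun hlim => ?_, tendsto_div_mul_sinRemainderIntegral_of_le_one 4 hB ha0⟩⟩
  · refine (isBigO_sinRemainderIntegral ha0).trans_tendsto ?_
    simpa [neg_sub, Function.comp_def] using
      (tendsto_rpow_neg_atTop (by linarith : 0 < 1 - a)).comp tendsto_natCast_atTop_atTop
  · have hequiv := isEquivalent_sinRemainderIntegral ha1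
    exact ⟨hequiv, hequiv.symm.tendsto_atTop
      ((tendsto_log_atTop.comp tendsto_natCast_atTop_atTop).const_mul_atTop (by linarith))⟩
  · by_contra! ha1
    have hzero := tendsto_nhds_unique hlim
      (tendsto_div_mul_sinRemainderIntegral_of_one_lt 4 hB.ne' ha1)
    have hpos : 0 < 4 * (a - 1) / B := div_pos (by linarith) hB
    linarith
end
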